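/- arXiv:2202.08380 — 2 statements merged into one kernel-verified Lean document; each statement's English description precedes it below -/
import Mathlib

section
/- For every integer d ≥ 2 there exists a positive semidefinite matrix Y on ℂ^d⊗ℂ^d such that the block matrix [[Y, −T_b(J)], [−T_b(J), Y]] is positive semidefinite and the partial trace satisfies Tr_b(Y) = (1 + 1/√(d−1))·I_d, where J is the Choi operator of M_d. (This establishes ‖T∘M_d‖_⋄ ≤ 1 + 1/√(d−1) and hence the quantum-capacity bound Q(M_d) ≤ log₂(1 + 1/√(d−1)); one may take Y = (1/(d−1))∑_{j=0}^{d−2}|0⟩⟨0|⊗|j⟩⟨j| + (1/√(d−1))|0⟩⟨0|⊗|d−1⟩⟨d−1| + ∑_{j=1}^{d−1}|j⟩⟨j|⊗|d−1⟩⟨d−1| + |Ξ⟩⟨Ξ| with |Ξ⟩ = (d−1)^{−1/4}∑_{j=1}^{d−1}|j⟩⊗|j−1⟩.) -/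
open Matrix Kronecker ComplexOrder

/-- Partial transpose on the second tensor factor. -/
noncomputable def ptransposeB {m n : ℕ}
    (M : Matrix (Fin m × Fin n) (Fin m × Fin n) ℂ) :
    Matrix (Fin m × Fin n) (Fin m × Fin n) ℂ :=
  Matrix.of fun p q => M (p.1, q.2) (q.1, p.2)

/-- Partial trace over the second tensor factor. -/
noncomputable def ptraceB {m n : ℕ}
    (M : Matrix (Fin m × Fin n) (Fin m × Fin n) ℂ) :
    Matrix (Fin m) (Fin m) ℂ :=
  Matrix.of fun i k => ∑ j, M (i, j) (k, j)

/-- The basis ket |i,j⟩ of ℂ^d ⊗ ℂ^d (zero if out of range). -/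
noncomputable def ket2 (d i j : ℕ) : Fin d × Fin d → ℂ := fun p =>
  if (p.1 : ℕ) = i ∧ (p.2 : ℕ) = j then 1 else 0

/-- The unnormalized Choi operator of the channel M_d. -/
noncomputable def choiMd (d : ℕ) : Matrix (Fin d × Fin d) (Fin d × Fin d) ℂ :=
  ∑ j ∈ Finset.range (d - 1),
    ((1 / ((d : ℂ) - 1)) • Matrix.vecMulVec (ket2 d 0 j) (star (ket2 d 0 j)) +
      Matrix.vecMulVec (ket2 d (j+1) (d-1)) (star (ket2 d (j+1) (d-1))) +
      ((1 / (Real.sqrt ((d : ℝ) - 1)) : ℝ) : ℂ) •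
        (Matrix.vecMulVec (ket2 d 0 j) (star (ket2 d (j+1) (d-1))) +
          Matrix.vecMulVec (ket2 d (j+1) (d-1)) (star (ket2 d 0 j))))

/-!
Write `e = |0, d-1⟩`, `K = ∑ⱼ |j+1, j⟩` and `c = 1/√(d-1)`, so that `|Ξ⟩⟨Ξ| = c K K†`. The partial
transpose of `J` is `D + c (e K† + K e†)` with `D` the diagonal part of `J`, and we take
`Y = D + c (e e† + K K†)`. Conjugating by the block Hadamard matrix shows that `[[Y, B], [B, Y]]` is
positive semidefinite as soon as `Y + B` and `Y - B` are; here `Y - T_b J = c (e - K)(e - K)†` and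
`Y + T_b J = 2 D + c (e + K)(e + K)†`. Finally both `Tr_b D` and `Tr_b (e e† + K K†)` equal
`|0⟩⟨0| + ∑_{i ≥ 1} |i⟩⟨i| = 1`.
-/

section BlockPosSemidef

variable {𝕜 n : Type*} [RCLike 𝕜] [Fintype n] [DecidableEq n] {M A B : Matrix n n 𝕜}

theorem Matrix.PosSemidef.fromBlocks_self (hM : M.PosSemidef) :
    (fromBlocks M M M M).PosSemidef := by
  simpa [conjTranspose_fromCols_eq_fromRows_conjTranspose, fromRows_mul, fromRows_mul_fromCols]
    using hM.conjTranspose_mul_mul_same (fromCols (1 : Matrix n n 𝕜) (1 : Matrix n n 𝕜))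

theorem Matrix.PosSemidef.fromBlocks_self_neg (hM : M.PosSemidef) :
    (fromBlocks M (-M) (-M) M).PosSemidef := by
  simpa [conjTranspose_fromCols_eq_fromRows_conjTranspose, fromRows_mul, fromRows_mul_fromCols]
    using hM.conjTranspose_mul_mul_same (fromCols (1 : Matrix n n 𝕜) (-1 : Matrix n n 𝕜))

theorem Matrix.posSemidef_fromBlocks_of_add_of_sub (hadd : (A + B).PosSemidef)
    (hsub : (A - B).PosSemidef) : (fromBlocks A B B A).PosSemidef := by
  convert (hadd.fromBlocks_self.add hsub.fromBlocks_self_neg).smul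
    (inv_nonneg.2 zero_le_two : (0 : 𝕜) ≤ 2⁻¹) using 1
  rw [fromBlocks_add, fromBlocks_smul]
  congr 1 <;> module

end BlockPosSemidef

section VecMulVec

variable {α ι m n : Type*} [NonUnitalNonAssocSemiring α]

theorem Matrix.sum_vecMulVec (s : Finset ι) (u : ι → m → α) (v : n → α) :
    vecMulVec (∑ i ∈ s, u i) v = ∑ i ∈ s, vecMulVec (u i) v := by
  ext p q; simp [vecMulVec_apply, Matrix.sum_apply, Finset.sum_mul]

theorem Matrix.vecMulVec_sum (s : Finset ι) (u : m → α) (v : ι → n → α) :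
    vecMulVec u (∑ i ∈ s, v i) = ∑ i ∈ s, vecMulVec u (v i) := by
  ext p q; simp [vecMulVec_apply, Matrix.sum_apply, Finset.mul_sum]

end VecMulVec

section Partial

variable {m n : ℕ} {ι : Type*}

theorem ptransposeB_add (A B : Matrix (Fin m × Fin n) (Fin m × Fin n) ℂ) :
    ptransposeB (A + B) = ptransposeB A + ptransposeB B := rfl

theorem ptransposeB_smul (a : ℂ) (A : Matrix (Fin m × Fin n) (Fin m × Fin n) ℂ) :
    ptransposeB (a • A) = a • ptransposeB A := rfl

theorem ptransposeB_sum (s : Finset ι) (A : ι → Matrix (Fin m × Fin n) (Fin m × Fin n) ℂ) :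
    ptransposeB (∑ i ∈ s, A i) = ∑ i ∈ s, ptransposeB (A i) := by
  ext p q; simp [ptransposeB, Matrix.sum_apply]

theorem ptraceB_add (A B : Matrix (Fin m × Fin n) (Fin m × Fin n) ℂ) :
    ptraceB (A + B) = ptraceB A + ptraceB B := by
  ext i k; simp [ptraceB, Finset.sum_add_distrib]

theorem ptraceB_smul (a : ℂ) (A : Matrix (Fin m × Fin n) (Fin m × Fin n) ℂ) :
    ptraceB (a • A) = a • ptraceB A := by
  ext i k; simp [ptraceB, Finset.mul_sum]

theorem ptraceB_sum (s : Finset ι) (A : ι → Matrix (Fin m × Fin n) (Fin m × Fin n) ℂ) :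
    ptraceB (∑ i ∈ s, A i) = ∑ i ∈ s, ptraceB (A i) := by
  ext i k; simp only [ptraceB, Matrix.sum_apply, of_apply]; exact Finset.sum_comm

end Partial

noncomputable def ket (d i : ℕ) : Fin d → ℂ := fun p => if (p : ℕ) = i then 1 else 0

theorem sum_vecMulVec_ket (d : ℕ) :
    ∑ i ∈ Finset.range d, vecMulVec (ket d i) (star (ket d i)) = 1 := by
  ext p q
  simp [ket, Matrix.sum_apply, vecMulVec_apply, one_apply, Fin.val_inj]

theorem ket_zero_add_sum_ket_succ {d : ℕ} (hd : 1 ≤ d) :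
    vecMulVec (ket d 0) (star (ket d 0)) +
      ∑ j ∈ Finset.range (d - 1), vecMulVec (ket d (j + 1)) (star (ket d (j + 1))) = 1 := by
  obtain ⟨n, rfl⟩ := Nat.exists_eq_add_of_le' hd
  rw [Nat.add_sub_cancel, ← sum_vecMulVec_ket, Finset.sum_range_succ']
  exact add_comm _ _

theorem ptransposeB_vecMulVec_ket2 (d i j k l : ℕ) :
    ptransposeB (vecMulVec (ket2 d i j) (star (ket2 d k l)))
      = vecMulVec (ket2 d i l) (star (ket2 d k j)) := by
  ext ⟨p₁, p₂⟩ ⟨q₁, q₂⟩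
  simp only [ptransposeB, of_apply, vecMulVec_apply, ket2, Pi.star_apply, apply_ite star,
    star_one, star_zero]
  split_ifs <;> simp_all

theorem ptraceB_vecMulVec_ket2 {d j : ℕ} (hj : j < d) (i k l : ℕ) :
    ptraceB (vecMulVec (ket2 d i j) (star (ket2 d k l)))
      = if j = l then vecMulVec (ket d i) (star (ket d k)) else 0 := by
  ext p q
  rw [ptraceB, of_apply, Finset.sum_eq_single ⟨j, hj⟩]
  · split_ifs <;> simp_all [ket, ket2, vecMulVec_apply]
  · intro r _ hr
    have : (r : ℕ) ≠ j := fun h => hr (Fin.ext h)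
    simp [ket2, vecMulVec_apply, this]
  · simp

noncomputable def shiftKet (d : ℕ) : Fin d × Fin d → ℂ :=
  ∑ j ∈ Finset.range (d - 1), ket2 d (j + 1) j

noncomputable def choiDiagPart (d : ℕ) : Matrix (Fin d × Fin d) (Fin d × Fin d) ℂ :=
  ∑ j ∈ Finset.range (d - 1),
    ((1 / ((d : ℂ) - 1)) • vecMulVec (ket2 d 0 j) (star (ket2 d 0 j)) +
      vecMulVec (ket2 d (j + 1) (d - 1)) (star (ket2 d (j + 1) (d - 1))))

noncomputable def choiCoherence (d : ℕ) : ℂ := ((1 / Real.sqrt ((d : ℝ) - 1) : ℝ) : ℂ)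

noncomputable def diamondWitness (d : ℕ) : Matrix (Fin d × Fin d) (Fin d × Fin d) ℂ :=
  choiDiagPart d + choiCoherence d •
    (vecMulVec (ket2 d 0 (d - 1)) (star (ket2 d 0 (d - 1))) +
      vecMulVec (shiftKet d) (star (shiftKet d)))

theorem ptransposeB_choiMd (d : ℕ) :
    ptransposeB (choiMd d) = choiDiagPart d + choiCoherence d •
      (vecMulVec (ket2 d 0 (d - 1)) (star (shiftKet d)) +
        vecMulVec (shiftKet d) (star (ket2 d 0 (d - 1)))) := by
  simp only [choiMd, ptransposeB_sum, ptransposeB_add, ptransposeB_smul,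
    ptransposeB_vecMulVec_ket2, Finset.sum_add_distrib, ← Finset.smul_sum, choiDiagPart,
    shiftKet, star_sum, vecMulVec_sum, sum_vecMulVec]
  rfl

theorem diamondWitness_add_neg_ptransposeB_choiMd (d : ℕ) :
    diamondWitness d + -ptransposeB (choiMd d) =
      choiCoherence d • vecMulVec (ket2 d 0 (d - 1) - shiftKet d)
        (star (ket2 d 0 (d - 1) - shiftKet d)) := by
  rw [diamondWitness, ptransposeB_choiMd, star_sub, vecMulVec_sub, sub_vecMulVec, sub_vecMulVec]
  module

theorem diamondWitness_sub_neg_ptransposeB_choiMd (d : ℕ) :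
    diamondWitness d - -ptransposeB (choiMd d) =
      (2 : ℂ) • choiDiagPart d + choiCoherence d • vecMulVec (ket2 d 0 (d - 1) + shiftKet d)
        (star (ket2 d 0 (d - 1) + shiftKet d)) := by
  rw [diamondWitness, ptransposeB_choiMd, star_add, vecMulVec_add, add_vecMulVec, add_vecMulVec]
  module

theorem choiCoherence_nonneg (d : ℕ) : 0 ≤ choiCoherence d :=
  Complex.zero_le_real.2 (by positivity)

theorem one_div_natCast_sub_one_nonneg {d : ℕ} (hd : 1 ≤ d) : (0 : ℂ) ≤ 1 / ((d : ℂ) - 1) := by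
  obtain ⟨n, rfl⟩ := Nat.exists_eq_add_of_le' hd
  push_cast
  simp only [add_sub_cancel_right]
  positivity

theorem choiDiagPart_posSemidef {d : ℕ} (hd : 1 ≤ d) : (choiDiagPart d).PosSemidef :=
  posSemidef_sum _ fun _ _ =>
    ((posSemidef_vecMulVec_self_star _).smul (one_div_natCast_sub_one_nonneg hd)).add
      (posSemidef_vecMulVec_self_star _)

theorem diamondWitness_posSemidef {d : ℕ} (hd : 1 ≤ d) : (diamondWitness d).PosSemidef :=
  (choiDiagPart_posSemidef hd).add <| ((posSemidef_vecMulVec_self_star _).add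
    (posSemidef_vecMulVec_self_star _)).smul (choiCoherence_nonneg d)

theorem ptraceB_choiDiagPart {d : ℕ} (hd : 2 ≤ d) : ptraceB (choiDiagPart d) = 1 := by
  have hdim : ((d - 1 : ℕ) : ℂ) * (1 / ((d : ℂ) - 1)) = 1 := by
    rw [Nat.cast_sub (by omega), Nat.cast_one, mul_one_div_cancel]
    exact sub_ne_zero.2 (by exact_mod_cast (by omega : d ≠ 1))
  have hterm : ∀ j ∈ Finset.range (d - 1),
      ptraceB ((1 / ((d : ℂ) - 1)) • vecMulVec (ket2 d 0 j) (star (ket2 d 0 j)) +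
        vecMulVec (ket2 d (j + 1) (d - 1)) (star (ket2 d (j + 1) (d - 1)))) =
      (1 / ((d : ℂ) - 1)) • vecMulVec (ket d 0) (star (ket d 0)) +
        vecMulVec (ket d (j + 1)) (star (ket d (j + 1))) := fun j hj => by
    have hj : j < d := by have := Finset.mem_range.1 hj; omega
    rw [ptraceB_add, ptraceB_smul, ptraceB_vecMulVec_ket2 hj,
      ptraceB_vecMulVec_ket2 (by omega : d - 1 < d), if_pos rfl, if_pos rfl]
  rw [choiDiagPart, ptraceB_sum, Finset.sum_congr rfl hterm, Finset.sum_add_distrib,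
    Finset.sum_const, Finset.card_range, ← Nat.cast_smul_eq_nsmul ℂ, smul_smul, hdim, one_smul,
    ket_zero_add_sum_ket_succ (by omega)]

theorem ptraceB_vecMulVec_shiftKet (d : ℕ) :
    ptraceB (vecMulVec (shiftKet d) (star (shiftKet d))) =
      ∑ j ∈ Finset.range (d - 1), vecMulVec (ket d (j + 1)) (star (ket d (j + 1))) := by
  simp only [shiftKet, star_sum, sum_vecMulVec, vecMulVec_sum, ptraceB_sum]
  rw [Finset.sum_comm]
  refine Finset.sum_congr rfl fun j hj => ?_
  have hjd : j < d := by have := Finset.mem_range.1 hj; omega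
  simp only [ptraceB_vecMulVec_ket2 hjd, Finset.sum_ite_eq, if_pos hj]

theorem ptraceB_diamondWitness {d : ℕ} (hd : 2 ≤ d) :
    ptraceB (diamondWitness d) = (1 + choiCoherence d) • 1 := by
  rw [diamondWitness, ptraceB_add, ptraceB_smul, ptraceB_add, ptraceB_choiDiagPart hd,
    ptraceB_vecMulVec_ket2 (by omega : d - 1 < d), if_pos rfl, ptraceB_vecMulVec_shiftKet,
    ket_zero_add_sum_ket_succ (by omega), add_smul, one_smul]

theorem fromBlocks_diamondWitness_posSemidef {d : ℕ} (hd : 1 ≤ d) :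
    (fromBlocks (diamondWitness d) (-ptransposeB (choiMd d))
      (-ptransposeB (choiMd d)) (diamondWitness d)).PosSemidef := by
  apply posSemidef_fromBlocks_of_add_of_sub
  · rw [diamondWitness_add_neg_ptransposeB_choiMd]
    exact (posSemidef_vecMulVec_self_star _).smul (choiCoherence_nonneg d)
  · rw [diamondWitness_sub_neg_ptransposeB_choiMd]
    exact ((choiDiagPart_posSemidef hd).smul zero_le_two).add
      ((posSemidef_vecMulVec_self_star _).smul (choiCoherence_nonneg d))

/-- Feasible point for the diamond-norm SDP: ‖T∘M_d‖_⋄ ≤ 1 + 1/√(d−1), hence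
Q(M_d) ≤ log₂(1 + 1/√(d−1)). -/
theorem stmt2 (d : ℕ) (hd : 2 ≤ d) :
    ∃ Y : Matrix (Fin d × Fin d) (Fin d × Fin d) ℂ,
      Y.PosSemidef ∧
      (Matrix.fromBlocks Y (-(ptransposeB (choiMd d)))
        (-(ptransposeB (choiMd d))) Y).PosSemidef ∧
      ptraceB Y =
        (((1 + 1 / Real.sqrt ((d : ℝ) - 1) : ℝ)) : ℂ) • (1 : Matrix (Fin d) (Fin d) ℂ) := by
  refine ⟨diamondWitness d, diamondWitness_posSemidef (by omega),
    fromBlocks_diamondWitness_posSemidef (by omega), ?_⟩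
  rw [ptraceB_diamondWitness hd, choiCoherence, Complex.ofReal_add, Complex.ofReal_one]
end

section
/- Let d ≥ 2 be an integer and define the density matrices ρ⁰ = |0⟩⟨0| and ρ¹ = (1/(d−1))∑_{j=1}^{d−1}|j⟩⟨j| on ℂ^d, and ρ̄ = ½ρ⁰ + ½ρ¹. Then [S(M_d(ρ̄)) − S(M_d^c(ρ̄))] − ½[S(M_d(ρ⁰)) − S(M_d^c(ρ⁰))] − ½[S(M_d(ρ¹)) − S(M_d^c(ρ¹))] = 1. (This shows the channel private information satisfies P^{(1)}(M_d) ≥ 1 for all d.) -/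
open Matrix ComplexOrder

/-- Von Neumann entropy (base-2) of a matrix: −∑ λᵢ log₂ λᵢ over its eigenvalues
(0 if the matrix is not Hermitian). -/
noncomputable def vnEntropy {n : ℕ} (ρ : Matrix (Fin n) (Fin n) ℂ) : ℝ :=
  if h : ρ.IsHermitian then -∑ i, (h.eigenvalues i) * Real.logb 2 (h.eigenvalues i) else 0

/-- The basis ket |i⟩ of ℂ^d (zero if out of range). -/
noncomputable def bket (d i : ℕ) : Fin d → ℂ := fun p => if (p : ℕ) = i then 1 else 0

/-- Kraus operator K_k = (1/√(d−1))|k⟩⟨0| + |d−1⟩⟨k+1| of M_d. -/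
noncomputable def KrM (d k : ℕ) : Matrix (Fin d) (Fin d) ℂ :=
  ((1 / Real.sqrt ((d : ℝ) - 1) : ℝ) : ℂ) • Matrix.vecMulVec (bket d k) (star (bket d 0)) +
    Matrix.vecMulVec (bket d (d-1)) (star (bket d (k+1)))

/-- The channel M_d. -/
noncomputable def chanMd (d : ℕ) (X : Matrix (Fin d) (Fin d) ℂ) : Matrix (Fin d) (Fin d) ℂ :=
  ∑ k ∈ Finset.range (d - 1), KrM d k * X * (KrM d k)ᴴ

/-- Kraus operator L_j = (1/√(d−1))|j⟩⟨0| of M_d^c, for 0 ≤ j ≤ d−2. -/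
noncomputable def LrM (d j : ℕ) : Matrix (Fin (d-1)) (Fin d) ℂ :=
  ((1 / Real.sqrt ((d : ℝ) - 1) : ℝ) : ℂ) • Matrix.vecMulVec (bket (d-1) j) (star (bket d 0))

/-- Kraus operator L_{d−1} = ∑_{i=1}^{d−1}|i−1⟩⟨i| of M_d^c. -/
noncomputable def VrM (d : ℕ) : Matrix (Fin (d-1)) (Fin d) ℂ :=
  Matrix.of fun a b => if (b : ℕ) = (a : ℕ) + 1 then 1 else 0

/-- The complementary channel M_d^c. -/
noncomputable def chanMdc (d : ℕ) (X : Matrix (Fin d) (Fin d) ℂ) :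
    Matrix (Fin (d-1)) (Fin (d-1)) ℂ :=
  (∑ j ∈ Finset.range (d - 1), LrM d j * X * (LrM d j)ᴴ) + VrM d * X * (VrM d)ᴴ

/-!
Write `mixState d p = p ρ⁰ + (1 - p) ρ¹`. Each Kraus operator maps a basis ket to a multiple of a
basis ket, so every output of the family is diagonal:
`M_d(mixState d p) = diag(p/(d-1), …, p/(d-1), 1 - p)`, while `M_dᶜ(mixState d p) = 𝟙/(d-1)` is
maximally mixed for every `p`. Hence the entropy difference at `mixState d p` is
`h(p) + (p - 1) log₂(d - 1)` with `h` the binary entropy, and the combination in the theorem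
collapses to `h(1/2) = 1`.
-/

lemma vnEntropy_diagonal {n : ℕ} (f : Fin n → ℝ) :
    vnEntropy (diagonal fun i => (f i : ℂ)) = -∑ i, f i * Real.logb 2 (f i) := by
  have hA : (diagonal fun i => (f i : ℂ)).IsHermitian :=
    isHermitian_diagonal_of_self_adjoint _ (by ext i; simp)
  have hroots : (diagonal fun i => (f i : ℂ)).charpoly.roots =
      Finset.univ.val.map (Complex.ofReal ∘ f) := by
    rw [charpoly_diagonal, Polynomial.roots_prod _ _
      (Finset.prod_ne_zero_iff.mpr fun i _ => Polynomial.X_sub_C_ne_zero _)]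
    simp
  have hspec : Finset.univ.val.map hA.eigenvalues = Finset.univ.val.map f := by
    apply Multiset.map_injective Complex.ofReal_injective
    rw [Multiset.map_map, Multiset.map_map, ← hroots]
    exact hA.roots_charpoly_eq_eigenvalues.symm
  have hsum := congrArg (fun s => (s.map fun x => x * Real.logb 2 x).sum) hspec
  simp only [Multiset.map_map, Function.comp_def] at hsum
  rw [vnEntropy, dif_pos hA, Finset.sum_eq_multiset_sum, Finset.sum_eq_multiset_sum, hsum]

lemma mul_vecMulVec_star_mul_conjTranspose {l m : Type*} [Fintype m] {α : Type*}
    [NonUnitalSemiring α] [StarRing α] (K : Matrix l m α) (u v : m → α) :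
    K * vecMulVec u (star v) * Kᴴ = vecMulVec (K *ᵥ u) (star (K *ᵥ v)) := by
  rw [mul_vecMulVec, vecMulVec_mul, vecMul_conjTranspose, star_star]

lemma vecMulVec_smul_star_smul {m : Type*} (c : ℂ) (u : m → ℂ) :
    vecMulVec (c • u) (star (c • u)) =
      ((Complex.normSq c : ℝ) : ℂ) • vecMulVec u (star u) := by
  rw [star_smul, smul_vecMulVec, vecMulVec_smul, smul_smul, Complex.star_def,
    Complex.mul_conj]

lemma bket_eq_single {d i : ℕ} (hi : i < d) : bket d i = Pi.single ⟨i, hi⟩ 1 := by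
  ext p
  simp [bket, Pi.single_apply, Fin.ext_iff]

@[simp]
lemma star_bket (d i : ℕ) : star (bket d i) = bket d i := by
  ext p
  simp [bket, apply_ite (star : ℂ → ℂ)]

lemma bket_dotProduct_bket {d a : ℕ} (b : ℕ) (ha : a < d) :
    bket d a ⬝ᵥ bket d b = if a = b then 1 else 0 := by
  simp [bket_eq_single ha, single_dotProduct, bket]

lemma vecMulVec_mulVec_eq_smul {m n α : Type*} [Fintype n] [CommSemiring α]
    (u : m → α) (v w : n → α) :
    vecMulVec u v *ᵥ w = (v ⬝ᵥ w) • u := by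
  rw [vecMulVec_mulVec, op_smul_eq_smul]

noncomputable def ketBra (d i : ℕ) : Matrix (Fin d) (Fin d) ℂ :=
  vecMulVec (bket d i) (star (bket d i))

lemma ketBra_eq_diagonal (d i : ℕ) :
    ketBra d i = diagonal fun p : Fin d => if (p : ℕ) = i then 1 else 0 := by
  ext p q
  simp only [ketBra, star_bket, vecMulVec_apply, bket, diagonal_apply]
  split_ifs <;> simp_all [Fin.ext_iff]

lemma sum_range_ketBra (d t : ℕ) :
    ∑ k ∈ Finset.range t, ketBra d k =
      diagonal fun p : Fin d => if (p : ℕ) < t then 1 else 0 := by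
  simp_rw [ketBra_eq_diagonal, ← diagonalAddMonoidHom_apply, ← map_sum]
  congr
  ext p
  simp [Finset.sum_apply]

lemma sum_range_ketBra_self (d : ℕ) : ∑ k ∈ Finset.range d, ketBra d k = 1 := by
  simp [sum_range_ketBra]

section Kraus

variable {d : ℕ}

lemma KrM_mulVec_bket_zero {k : ℕ} (hk : k < d - 1) :
    KrM d k *ᵥ bket d 0 = ((1 / Real.sqrt ((d : ℝ) - 1) : ℝ) : ℂ) • bket d k := by
  rw [KrM, add_mulVec, smul_mulVec, vecMulVec_mulVec_eq_smul, vecMulVec_mulVec_eq_smul,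
    star_bket, star_bket, bket_dotProduct_bket 0 (by omega), bket_dotProduct_bket 0 (by omega)]
  simp

lemma KrM_mulVec_bket_succ {k j : ℕ} (hk : k < d - 1) (hj : j < d - 1) :
    KrM d k *ᵥ bket d (j + 1) = if j = k then bket d (d - 1) else 0 := by
  rw [KrM, add_mulVec, smul_mulVec, vecMulVec_mulVec_eq_smul, vecMulVec_mulVec_eq_smul,
    star_bket, star_bket, bket_dotProduct_bket _ (by omega), bket_dotProduct_bket _ (by omega)]
  rcases eq_or_ne j k with rfl | h
  · simp
  · simp [h, h.symm]

lemma LrM_mulVec_bket_zero {j : ℕ} (hj : j < d - 1) :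
    LrM d j *ᵥ bket d 0 = ((1 / Real.sqrt ((d : ℝ) - 1) : ℝ) : ℂ) • bket (d - 1) j := by
  rw [LrM, smul_mulVec, vecMulVec_mulVec_eq_smul, star_bket, bket_dotProduct_bket 0 (by omega)]
  simp

lemma LrM_mulVec_bket_succ {j t : ℕ} (ht : t < d - 1) : LrM d j *ᵥ bket d (t + 1) = 0 := by
  rw [LrM, smul_mulVec, vecMulVec_mulVec_eq_smul, star_bket, bket_dotProduct_bket _ (by omega)]
  simp

lemma VrM_mulVec_bket_zero (hd : 0 < d) : VrM d *ᵥ bket d 0 = 0 := by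
  ext a
  simp [bket_eq_single hd, VrM]

lemma VrM_mulVec_bket_succ {j : ℕ} (hj : j < d - 1) :
    VrM d *ᵥ bket d (j + 1) = bket (d - 1) j := by
  ext a
  simp [bket_eq_single (show j + 1 < d by omega), VrM, bket, eq_comm]

end Kraus

lemma normSq_ofReal_one_div_sqrt {x : ℝ} (hx : 0 ≤ x) :
    Complex.normSq ((1 / Real.sqrt x : ℝ) : ℂ) = x⁻¹ := by
  rw [Complex.normSq_ofReal, div_mul_div_comm, one_mul, Real.mul_self_sqrt hx, one_div]

section Channels

variable {d : ℕ}

lemma chanMd_add (X Y : Matrix (Fin d) (Fin d) ℂ) :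
    chanMd d (X + Y) = chanMd d X + chanMd d Y := by
  simp [chanMd, Matrix.mul_add, Matrix.add_mul, Finset.sum_add_distrib]

lemma chanMd_smul (a : ℂ) (X : Matrix (Fin d) (Fin d) ℂ) :
    chanMd d (a • X) = a • chanMd d X := by
  simp [chanMd, Finset.smul_sum]

lemma chanMd_sum {ι : Type*} (s : Finset ι) (X : ι → Matrix (Fin d) (Fin d) ℂ) :
    chanMd d (∑ j ∈ s, X j) = ∑ j ∈ s, chanMd d (X j) := by
  simp only [chanMd, Matrix.mul_sum, Matrix.sum_mul]
  exact Finset.sum_comm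

lemma chanMdc_add (X Y : Matrix (Fin d) (Fin d) ℂ) :
    chanMdc d (X + Y) = chanMdc d X + chanMdc d Y := by
  simp only [chanMdc, Matrix.mul_add, Matrix.add_mul, Finset.sum_add_distrib]
  abel

lemma chanMdc_smul (a : ℂ) (X : Matrix (Fin d) (Fin d) ℂ) :
    chanMdc d (a • X) = a • chanMdc d X := by
  simp [chanMdc, Finset.smul_sum, smul_add]

lemma chanMdc_sum {ι : Type*} (s : Finset ι) (X : ι → Matrix (Fin d) (Fin d) ℂ) :
    chanMdc d (∑ j ∈ s, X j) = ∑ j ∈ s, chanMdc d (X j) := by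
  simp only [chanMdc, Matrix.mul_sum, Matrix.sum_mul, Finset.sum_add_distrib]
  rw [Finset.sum_comm]

lemma chanMd_ketBra_zero (hd : 1 ≤ d) :
    chanMd d (ketBra d 0) =
      ((((d : ℝ) - 1)⁻¹ : ℝ) : ℂ) • ∑ k ∈ Finset.range (d - 1), ketBra d k := by
  rw [chanMd, Finset.smul_sum]
  refine Finset.sum_congr rfl fun k hk => ?_
  rw [ketBra, mul_vecMulVec_star_mul_conjTranspose,
    KrM_mulVec_bket_zero (Finset.mem_range.mp hk), vecMulVec_smul_star_smul,
    normSq_ofReal_one_div_sqrt (by simpa using hd), ketBra]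

lemma chanMd_ketBra_succ {j : ℕ} (hj : j < d - 1) :
    chanMd d (ketBra d (j + 1)) = ketBra d (d - 1) := by
  rw [chanMd, Finset.sum_eq_single_of_mem j (Finset.mem_range.mpr hj)]
  · rw [ketBra, mul_vecMulVec_star_mul_conjTranspose, KrM_mulVec_bket_succ hj hj, if_pos rfl,
      ketBra]
  · intro k hk hkj
    rw [ketBra, mul_vecMulVec_star_mul_conjTranspose,
      KrM_mulVec_bket_succ (Finset.mem_range.mp hk) hj, if_neg hkj.symm]
    simp

lemma chanMdc_ketBra_zero (hd : 1 ≤ d) :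
    chanMdc d (ketBra d 0) = ((((d : ℝ) - 1)⁻¹ : ℝ) : ℂ) • 1 := by
  have hL : ∀ j ∈ Finset.range (d - 1), LrM d j * ketBra d 0 * (LrM d j)ᴴ =
      ((((d : ℝ) - 1)⁻¹ : ℝ) : ℂ) • ketBra (d - 1) j := fun j hj => by
    rw [ketBra, mul_vecMulVec_star_mul_conjTranspose,
      LrM_mulVec_bket_zero (Finset.mem_range.mp hj), vecMulVec_smul_star_smul,
      normSq_ofReal_one_div_sqrt (by simpa using hd), ketBra]
  rw [chanMdc, Finset.sum_congr rfl hL, ← Finset.smul_sum, sum_range_ketBra_self, ketBra,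
    mul_vecMulVec_star_mul_conjTranspose, VrM_mulVec_bket_zero hd]
  simp

lemma chanMdc_ketBra_succ {j : ℕ} (hj : j < d - 1) :
    chanMdc d (ketBra d (j + 1)) = ketBra (d - 1) j := by
  have hL : ∀ t ∈ Finset.range (d - 1), LrM d t * ketBra d (j + 1) * (LrM d t)ᴴ = 0 :=
    fun t _ => by
      rw [ketBra, mul_vecMulVec_star_mul_conjTranspose, LrM_mulVec_bket_succ hj, zero_vecMulVec]
  rw [chanMdc, Finset.sum_eq_zero hL, zero_add, ketBra, mul_vecMulVec_star_mul_conjTranspose,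
    VrM_mulVec_bket_succ hj, ketBra]

end Channels

noncomputable def excitedState (d : ℕ) : Matrix (Fin d) (Fin d) ℂ :=
  (1 / ((d : ℂ) - 1)) • ∑ j ∈ Finset.range (d - 1), ketBra d (j + 1)

noncomputable def mixState (d : ℕ) (p : ℝ) : Matrix (Fin d) (Fin d) ℂ :=
  (p : ℂ) • ketBra d 0 + ((1 - p : ℝ) : ℂ) • excitedState d

section States

variable {d : ℕ}

lemma chanMd_excitedState (hd : 2 ≤ d) : chanMd d (excitedState d) = ketBra d (d - 1) := by
  have hd' : (d : ℂ) - 1 ≠ 0 := by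
    rw [sub_ne_zero, Ne, Nat.cast_eq_one]
    omega
  rw [excitedState, chanMd_smul, chanMd_sum,
    Finset.sum_congr rfl fun j hj => chanMd_ketBra_succ (Finset.mem_range.mp hj),
    Finset.sum_const, Finset.card_range, ← Nat.cast_smul_eq_nsmul ℂ, smul_smul,
    Nat.cast_sub (by omega), Nat.cast_one, one_div, inv_mul_cancel₀ hd',
    one_smul]

lemma chanMdc_excitedState :
    chanMdc d (excitedState d) = ((((d : ℝ) - 1)⁻¹ : ℝ) : ℂ) • 1 := by
  rw [excitedState, chanMdc_smul, chanMdc_sum,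
    Finset.sum_congr rfl fun j hj => chanMdc_ketBra_succ (Finset.mem_range.mp hj),
    sum_range_ketBra_self]
  push_cast
  rw [one_div]

lemma chanMd_mixState (hd : 2 ≤ d) (p : ℝ) :
    chanMd d (mixState d p) =
      diagonal fun i : Fin d =>
        ((if (i : ℕ) = d - 1 then 1 - p else p / ((d : ℝ) - 1) : ℝ) : ℂ) := by
  rw [mixState, chanMd_add, chanMd_smul, chanMd_smul, chanMd_ketBra_zero (by omega),
    chanMd_excitedState hd, sum_range_ketBra, ketBra_eq_diagonal]
  ext i j
  by_cases hij : i = j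
  · subst hij
    by_cases hi : (i : ℕ) = d - 1
    · simp [hi]
    · simp [hi, show (i : ℕ) < d - 1 by omega, div_eq_mul_inv]
  · simp [hij]

lemma chanMdc_mixState (hd : 1 ≤ d) (p : ℝ) :
    chanMdc d (mixState d p) =
      diagonal fun _ : Fin (d - 1) => ((((d : ℝ) - 1)⁻¹ : ℝ) : ℂ) := by
  rw [mixState, chanMdc_add, chanMdc_smul, chanMdc_smul, chanMdc_ketBra_zero hd,
    chanMdc_excitedState, smul_smul, smul_smul, ← add_smul, ← diagonal_one, ← diagonal_smul]
  congr 1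
  ext
  simp only [Pi.smul_apply, smul_eq_mul, mul_one]
  push_cast
  ring

end States

lemma vnEntropy_chanMd_mixState {d : ℕ} (hd : 2 ≤ d) (p : ℝ) :
    vnEntropy (chanMd d (mixState d p)) =
      -(p * Real.logb 2 (p / ((d : ℝ) - 1)) + (1 - p) * Real.logb 2 (1 - p)) := by
  rw [chanMd_mixState hd, vnEntropy_diagonal]
  obtain ⟨n, rfl⟩ : ∃ n, d = n + 1 := ⟨d - 1, by omega⟩
  have hn : (n : ℝ) ≠ 0 := by norm_cast; omega
  simp [Fin.sum_univ_castSucc, Fin.val_castSucc, (Fin.is_lt _).ne]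
  field_simp

lemma vnEntropy_chanMdc_mixState {d : ℕ} (hd : 2 ≤ d) (p : ℝ) :
    vnEntropy (chanMdc d (mixState d p)) = Real.logb 2 ((d : ℝ) - 1) := by
  have hd' : (d : ℝ) - 1 ≠ 0 := by
    rw [sub_ne_zero, Ne, Nat.cast_eq_one]
    omega
  rw [chanMdc_mixState (by omega), vnEntropy_diagonal, Finset.sum_const, Finset.card_univ,
    Fintype.card_fin, nsmul_eq_mul, Nat.cast_sub (by omega), Nat.cast_one, Real.logb_inv]
  field_simp

/-- The private-information ensemble {½, ρ⁰; ½, ρ¹} of the channel M_d achieves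
Δ(M_d, ρ̄) − ½Δ(M_d, ρ⁰) − ½Δ(M_d, ρ¹) = 1, so P⁽¹⁾(M_d) ≥ 1. -/
theorem stmt6 (d : ℕ) (hd : 2 ≤ d) :
    let ρ0 : Matrix (Fin d) (Fin d) ℂ := Matrix.vecMulVec (bket d 0) (star (bket d 0))
    let ρ1 : Matrix (Fin d) (Fin d) ℂ :=
      (1 / ((d : ℂ) - 1)) •
        ∑ j ∈ Finset.range (d - 1), Matrix.vecMulVec (bket d (j+1)) (star (bket d (j+1)))
    let ρbar : Matrix (Fin d) (Fin d) ℂ := (1/2 : ℂ) • ρ0 + (1/2 : ℂ) • ρ1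
    (vnEntropy (chanMd d ρbar) - vnEntropy (chanMdc d ρbar)) -
      (1/2) * (vnEntropy (chanMd d ρ0) - vnEntropy (chanMdc d ρ0)) -
      (1/2) * (vnEntropy (chanMd d ρ1) - vnEntropy (chanMdc d ρ1)) = 1 := by
  intro ρ0 ρ1 ρbar
  have h0 : ρ0 = mixState d 1 := by simp [mixState, ρ0, ketBra]
  have h1 : ρ1 = mixState d 0 := by simp [mixState, ρ1, excitedState, ketBra]
  have hbar : ρbar = mixState d (1 / 2) := by
    simp only [ρbar, h0, h1, mixState]
    norm_num
  have hd' : (0 : ℝ) < (d : ℝ) - 1 := by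
    rw [sub_pos, Nat.one_lt_cast]
    omega
  rw [hbar, h0, h1]
  simp only [vnEntropy_chanMd_mixState hd, vnEntropy_chanMdc_mixState hd]
  norm_num [Real.logb_div, hd'.ne']
  ring
end
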